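/- For any W, L ∈ ℕ there exists φ ∈ NN_{2,1}(9W+1, L) such that for all x, x′, y, y′ ∈ [−1,1]: |xy − φ(x,y)| ≤ 6·W^{−L} and |φ(x,y) − φ(x′,y′)| ≤ 7|x−x′| + 7|y−y′|. -/

import Mathlib

open Finset
open scoped BigOperators

/-- ReLU activation. -/
noncomputable def relu (x : ℝ) : ℝ := max x 0

/-- Parameters of a fully connected feed-forward ReLU neural network with input
dimension `d` and output dimension `k`. -/
structure MLP (d k : ℕ) where
  depth : ℕ
  width : ℕ → ℕ
  width_in : width 0 = d
  width_out : width (depth + 1) = k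
  A : (ℓ : ℕ) → Matrix (Fin (width (ℓ + 1))) (Fin (width ℓ)) ℝ
  b : (ℓ : ℕ) → Fin (width (ℓ + 1)) → ℝ

namespace MLP

variable {d k : ℕ}

/-- Hidden layer outputs: `φ₀(x) = x`, `φ_{ℓ+1}(x) = σ(A_ℓ φ_ℓ(x) + b_ℓ)`. -/
noncomputable def layer (φ : MLP d k) (x : Fin d → ℝ) : (ℓ : ℕ) → Fin (φ.width ℓ) → ℝ
  | 0 => fun i => x (Fin.cast φ.width_in i)
  | ℓ + 1 => fun i => relu ((φ.A ℓ).mulVec (layer φ x ℓ) i + φ.b ℓ i)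

/-- The function computed by the network: `φ(x) = A_L φ_L(x) + b_L`. -/
noncomputable def eval (φ : MLP d k) (x : Fin d → ℝ) : Fin k → ℝ := fun j =>
  (φ.A φ.depth).mulVec (φ.layer x φ.depth) (Fin.cast φ.width_out.symm j) +
    φ.b φ.depth (Fin.cast φ.width_out.symm j)

/-- Maximum ℓ¹-norm of the rows of the augmented matrix `(A, b)`. -/
noncomputable def augNorm {m n : ℕ} (A : Matrix (Fin m) (Fin n) ℝ) (b : Fin m → ℝ) : ℝ :=
  ⨆ i : Fin m, ((∑ j, |A i j|) + |b i|)

/-- The norm constraint `κ(θ) = ‖(A_L,b_L)‖ ∏_{ℓ<L} max{‖(A_ℓ,b_ℓ)‖, 1}`. -/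
noncomputable def kappa (φ : MLP d k) : ℝ :=
  augNorm (φ.A φ.depth) (φ.b φ.depth) *
    ∏ ℓ ∈ Finset.range φ.depth, max (augNorm (φ.A ℓ) (φ.b ℓ)) 1

end MLP

/-- The class `NN_{d,k}(W, L)` of ReLU networks with width at most `W` and depth `L`. -/
def NNSet (d k W L : ℕ) : Set ((Fin d → ℝ) → Fin k → ℝ) :=
  {f | ∃ φ : MLP d k, φ.depth = L ∧ (∀ ℓ, 1 ≤ ℓ → ℓ ≤ L → φ.width ℓ ≤ W) ∧ f = φ.eval}

/-- The norm-constrained class `NN_{d,k}(W, L, K)`. -/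
def NNSetNorm (d k W L : ℕ) (K : ℝ) : Set ((Fin d → ℝ) → Fin k → ℝ) :=
  {f | ∃ φ : MLP d k, φ.depth = L ∧ (∀ ℓ, 1 ≤ ℓ → ℓ ≤ L → φ.width ℓ ≤ W) ∧
      φ.kappa ≤ K ∧ f = φ.eval}

/-- Scalar-valued networks `NN_{d,1}(W, L)`, viewed as maps `ℝ^d → ℝ`. -/
def NNScalar (d W L : ℕ) : Set ((Fin d → ℝ) → ℝ) :=
  {f | ∃ g ∈ NNSet d 1 W L, f = fun x => g x 0}

/-- Scalar-valued norm-constrained networks `NN_{d,1}(W, L, K)`, viewed as maps `ℝ^d → ℝ`. -/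
def NNScalarNorm (d W L : ℕ) (K : ℝ) : Set ((Fin d → ℝ) → ℝ) :=
  {f | ∃ g ∈ NNSetNorm d 1 W L K, f = fun x => g x 0}

/-- Networks `NN_{1,k}(W, L)` with one-dimensional input, viewed as maps `ℝ → ℝ^k`. -/
def NNFromReal (k W L : ℕ) : Set (ℝ → Fin k → ℝ) :=
  {f | ∃ g ∈ NNSet 1 k W L, f = fun t => g (fun _ => t)}

/-- Norm-constrained networks `NN_{1,1}(W, L, K)`, viewed as maps `ℝ → ℝ`. -/
def NNRealScalarNorm (W L : ℕ) (K : ℝ) : Set (ℝ → ℝ) :=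
  {f | ∃ g ∈ NNSetNorm 1 1 W L K, f = fun t => g (fun _ => t) 0}

/-!
Put `u = (x + y + 2) / 4` and `v = (x - y + 2) / 4`, both in `[0, 1]`, so that
`x y = -4 (u (1 - u) - v (1 - v))`. With `p` the periodic parabola, `T ℓ t = triangleWave (W ^ ℓ t)`
and `g s = p s - p (W s) / W ^ 2`, the identity `p ∘ triangleWave = p` makes
`∑ ℓ < L, g (T ℓ t) / W ^ (2 ℓ)` telescope to `t (1 - t) - p (W ^ L t) / W ^ (2 L)`.
On `[0, 1]` both `triangleWave (W s)` and `g s` are piecewise linear with knots `k / W`, hence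
combinations of the `W` ramps `relu (s - k / W)`. So hidden layers of width `2 W + 1` can carry
the ramps of `T ℓ u`, the ramps of `T ℓ v`, and the running sum, and the network computes
`x y + 4 (p (W ^ L u) - p (W ^ L v)) / W ^ (2 L)`. The error term is at most `W ^ (-2 L)`, and as
`p` is `1`-Lipschitz it is `4 W ^ (-L)`-Lipschitz in each of `u` and `v`.
-/

lemma relu_of_nonneg {x : ℝ} (h : 0 ≤ x) : relu x = x := max_eq_left h

lemma relu_of_nonpos {x : ℝ} (h : x ≤ 0) : relu x = 0 := max_eq_right h

noncomputable def distInt (z : ℝ) : ℝ := |z - round z|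

lemma distInt_nonneg (z : ℝ) : 0 ≤ distInt z := abs_nonneg _

lemma distInt_le_half (z : ℝ) : distInt z ≤ 1 / 2 := abs_sub_round z

lemma distInt_add_intCast (z : ℝ) (n : ℤ) : distInt (z + n) = distInt z := by
  rw [distInt, distInt, round_add_intCast]
  push_cast
  ring_nf

lemma distInt_neg (z : ℝ) : distInt (-z) = distInt z := by
  simp only [distInt, abs_sub_round_eq_min]
  by_cases h : Int.fract z = 0
  · rw [h, Int.fract_neg_eq_zero.mpr h]
  · rw [Int.fract_neg h, min_comm, sub_sub_cancel]

lemma distInt_le_abs_sub_add (a b : ℝ) : distInt a ≤ |a - b| + distInt b :=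
  calc distInt a ≤ |a - round b| := round_le a (round b)
    _ = |(a - b) + (b - round b)| := by ring_nf
    _ ≤ |a - b| + distInt b := abs_add_le _ _

lemma abs_distInt_sub_distInt_le (a b : ℝ) : |distInt a - distInt b| ≤ |a - b| := by
  have := distInt_le_abs_sub_add a b
  have := distInt_le_abs_sub_add b a
  rw [abs_sub_comm b a] at this
  exact abs_sub_le_iff.mpr ⟨by linarith, by linarith⟩

lemma distInt_of_mem_Icc {t : ℝ} (h₀ : 0 ≤ t) (h₁ : t ≤ 1) : distInt t = min t (1 - t) := by
  rw [distInt, abs_sub_round_eq_min]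
  rcases h₁.lt_or_eq with h | rfl
  · rw [Int.fract_eq_self.mpr ⟨h₀, h⟩]
  · simp

lemma distInt_eq_min {n : ℤ} {z : ℝ} (h₀ : n ≤ z) (h₁ : z ≤ n + 1) :
    distInt z = min (z - n) (n + 1 - z) := by
  have h := distInt_of_mem_Icc (t := z - n) (by linarith) (by linarith)
  rw [← distInt_add_intCast (z - n) n, sub_add_cancel] at h
  rw [h, sub_sub_eq_add_sub, add_comm 1 (n : ℝ)]

noncomputable def triangleWave (z : ℝ) : ℝ := 2 * distInt (z / 2)

lemma triangleWave_nonneg (z : ℝ) : 0 ≤ triangleWave z := by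
  have := distInt_nonneg (z / 2); unfold triangleWave; linarith

lemma triangleWave_le_one (z : ℝ) : triangleWave z ≤ 1 := by
  have := distInt_le_half (z / 2); unfold triangleWave; linarith

lemma triangleWave_eq {j : ℕ} {z : ℝ} (h₀ : j ≤ z) (h₁ : z ≤ j + 1) :
    triangleWave z = if Even j then z - j else j + 1 - z := by
  obtain ⟨a, rfl | rfl⟩ := Nat.even_or_odd' j
  · rw [if_pos (even_two_mul a), triangleWave,
      distInt_eq_min (n := a) (by push_cast at h₀ ⊢; linarith) (by push_cast at h₁ ⊢; linarith),
      min_eq_left (by push_cast at h₁ ⊢; linarith)]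
    push_cast; ring
  · rw [if_neg (Nat.not_even_iff_odd.mpr (odd_two_mul_add_one a)), triangleWave,
      distInt_eq_min (n := a) (by push_cast at h₀ ⊢; linarith) (by push_cast at h₁ ⊢; linarith),
      min_eq_right (by push_cast at h₀ ⊢; linarith)]
    push_cast; ring

lemma triangleWave_of_mem_Icc {z : ℝ} (h₀ : 0 ≤ z) (h₁ : z ≤ 1) : triangleWave z = z := by
  simpa using triangleWave_eq (j := 0) (by simpa using h₀) (by simpa using h₁)

lemma triangleWave_neg (z : ℝ) : triangleWave (-z) = triangleWave z := by
  rw [triangleWave, triangleWave, neg_div, distInt_neg]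

lemma triangleWave_add_two_mul_intCast (z : ℝ) (n : ℤ) :
    triangleWave (z + 2 * n) = triangleWave z := by
  rw [triangleWave, triangleWave, ← distInt_add_intCast (z / 2) n]
  ring_nf

lemma exists_triangleWave_eq (z : ℝ) :
    ∃ n : ℤ, triangleWave z = z - 2 * n ∨ triangleWave z = -(z - 2 * n) := by
  refine ⟨round (z / 2), ?_⟩
  rcases abs_choice (z / 2 - round (z / 2)) with h | h
  · left; rw [triangleWave, distInt, h]; ring
  · right; rw [triangleWave, distInt, h]; ring

lemma comp_natCast_mul_triangleWave {f : ℝ → ℝ} (hneg : ∀ z, f (-z) = f z)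
    (hper : ∀ z (n : ℤ), f (z + 2 * n) = f z) (m : ℕ) (z : ℝ) :
    f (m * triangleWave z) = f (m * z) := by
  obtain ⟨n, h | h⟩ := exists_triangleWave_eq z
  · rw [h, ← hper (m * (z - 2 * n)) (m * n)]
    push_cast; ring_nf
  · rw [h, ← hneg, ← hper (-(m * -(z - 2 * n))) (m * n)]
    push_cast; ring_nf

lemma triangleWave_natCast_mul_triangleWave (m : ℕ) (z : ℝ) :
    triangleWave (m * triangleWave z) = triangleWave (m * z) :=
  comp_natCast_mul_triangleWave triangleWave_neg triangleWave_add_two_mul_intCast m z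

/-- The `1`-periodic extension of `t ↦ t (1 - t)` from `[0, 1]`. -/
noncomputable def parabolaWave (z : ℝ) : ℝ := distInt z * (1 - distInt z)

lemma parabolaWave_nonneg (z : ℝ) : 0 ≤ parabolaWave z := by
  have := distInt_nonneg z; have := distInt_le_half z
  unfold parabolaWave; nlinarith

lemma parabolaWave_le_quarter (z : ℝ) : parabolaWave z ≤ 1 / 4 := by
  unfold parabolaWave; nlinarith [sq_nonneg (distInt z - 1 / 2)]

lemma abs_parabolaWave_sub_le (a b : ℝ) : |parabolaWave a - parabolaWave b| ≤ |a - b| := by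
  have hfac : |1 - distInt a - distInt b| ≤ 1 := by
    have := distInt_nonneg a; have := distInt_nonneg b
    have := distInt_le_half a; have := distInt_le_half b
    exact abs_le.mpr ⟨by linarith, by linarith⟩
  calc |parabolaWave a - parabolaWave b|
      = |distInt a - distInt b| * |1 - distInt a - distInt b| := by
        rw [← abs_mul, parabolaWave, parabolaWave]; ring_nf
    _ ≤ |a - b| * 1 :=
        mul_le_mul (abs_distInt_sub_distInt_le a b) hfac (abs_nonneg _) (abs_nonneg _)
    _ = |a - b| := mul_one _

lemma parabolaWave_eq {n : ℤ} {z : ℝ} (h₀ : n ≤ z) (h₁ : z ≤ n + 1) :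
    parabolaWave z = (z - n) * (n + 1 - z) := by
  rw [parabolaWave, distInt_eq_min h₀ h₁]
  rcases min_choice (z - n) (n + 1 - z) with h | h <;> rw [h] <;> ring

lemma parabolaWave_of_mem_Icc {z : ℝ} (h₀ : 0 ≤ z) (h₁ : z ≤ 1) :
    parabolaWave z = z * (1 - z) := by
  simpa using parabolaWave_eq (n := 0) (by simpa using h₀) (by simpa using h₁)

lemma parabolaWave_natCast_mul_triangleWave (m : ℕ) (z : ℝ) :
    parabolaWave (m * triangleWave z) = parabolaWave (m * z) := by
  refine comp_natCast_mul_triangleWave (fun z => ?_) (fun z n => ?_) m z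
  · rw [parabolaWave, parabolaWave, distInt_neg]
  · rw [parabolaWave, parabolaWave, ← Int.cast_ofNat, ← Int.cast_mul, distInt_add_intCast]

section Ramps

variable {W : ℕ}

noncomputable def ramps (W : ℕ) (s : ℝ) (k : ℕ) : ℝ := relu (s - k / W)

lemma exists_nat_le_mul_le (hW : 0 < W) {s : ℝ} (h₀ : 0 ≤ s) (h₁ : s ≤ 1) :
    ∃ j < W, (j : ℝ) ≤ W * s ∧ W * s ≤ j + 1 := by
  rcases h₁.lt_or_eq with h | rfl
  · refine ⟨⌊(W : ℝ) * s⌋₊, ?_, Nat.floor_le (by positivity), (Nat.lt_floor_add_one _).le⟩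
    rw [Nat.floor_lt (by positivity)]
    exact mul_lt_of_lt_one_right (by exact_mod_cast hW) h
  · refine ⟨W - 1, by omega, ?_, ?_⟩ <;> push_cast [Nat.cast_sub hW] <;> linarith

lemma sum_mul_ramps {j : ℕ} (hj : j < W) {s : ℝ} (h₀ : j ≤ W * s) (h₁ : W * s ≤ j + 1)
    (e : ℕ → ℝ) : ∑ k ∈ range W, e k * ramps W s k = ∑ k ∈ range (j + 1), e k * (s - k / W) := by
  have hW : (0 : ℝ) < W := by exact_mod_cast (j.zero_le.trans_lt hj)
  rw [← sum_range_add_sum_Ico _ hj, sum_eq_zero (s := Ico _ _), add_zero]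
  · refine sum_congr rfl fun k hk => ?_
    have hk : (k : ℝ) ≤ j := by exact_mod_cast Nat.lt_succ_iff.mp (mem_range.mp hk)
    rw [ramps, relu_of_nonneg (by rw [sub_nonneg, div_le_iff₀ hW]; linarith)]
  · intro k hk
    have hk : (j : ℝ) + 1 ≤ k := by exact_mod_cast (mem_Ico.mp hk).1
    rw [ramps, relu_of_nonpos (by rw [sub_nonpos, le_div_iff₀ hW]; linarith), mul_zero]

noncomputable def parabolaStep (W : ℕ) (s : ℝ) : ℝ :=
  parabolaWave s - parabolaWave (W * s) / W ^ 2

-- On `[0, 1]`, `triangleWave (W s)` and `parabolaStep W s` are affine between consecutive knots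
-- `k / W`: the coefficients are their initial slopes and the jumps of their slopes at the knots.
noncomputable def triangleCoeff (W k : ℕ) : ℝ :=
  if k = 0 then W else if Even k then 2 * W else -(2 * W)

noncomputable def parabolaCoeff (W k : ℕ) : ℝ := if k = 0 then 1 - 1 / W else -(2 / W)

lemma triangleCoeff_succ (W j : ℕ) :
    triangleCoeff W (j + 1) = if Even j then -(2 * W : ℝ) else 2 * W := by
  by_cases hj : Even j <;> simp [triangleCoeff, hj, Nat.even_add_one]

lemma parabolaCoeff_succ (W j : ℕ) : parabolaCoeff W (j + 1) = -(2 / W) := rfl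

lemma sum_triangleCoeff_mul (hW : (W : ℝ) ≠ 0) (s : ℝ) (j : ℕ) :
    ∑ k ∈ range (j + 1), triangleCoeff W k * (s - k / W) =
      if Even j then W * s - j else j + 1 - W * s := by
  induction j with
  | zero => simp [triangleCoeff]
  | succ j ih =>
    rw [sum_range_succ, ih, triangleCoeff_succ]
    by_cases hj : Even j
    · rw [if_pos hj, if_pos hj, if_neg (Nat.even_add_one.not.mpr (not_not.mpr hj))]
      push_cast; field_simp; ring
    · rw [if_neg hj, if_neg hj, if_pos (Nat.even_add_one.mpr hj)]
      push_cast; field_simp; ring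

lemma sum_parabolaCoeff_mul (hW : (W : ℝ) ≠ 0) (s : ℝ) (j : ℕ) :
    ∑ k ∈ range (j + 1), parabolaCoeff W k * (s - k / W) =
      s * (1 - s) - (W * s - j) * (j + 1 - W * s) / W ^ 2 := by
  induction j with
  | zero =>
    rw [sum_range_one, parabolaCoeff, if_pos rfl]
    push_cast; field_simp; ring
  | succ j ih =>
    rw [sum_range_succ, ih, parabolaCoeff_succ]
    push_cast; field_simp; ring

lemma sum_triangleCoeff_mul_ramps (hW : 0 < W) {s : ℝ} (h₀ : 0 ≤ s) (h₁ : s ≤ 1) :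
    ∑ k ∈ range W, triangleCoeff W k * ramps W s k = triangleWave (W * s) := by
  obtain ⟨j, hj, hjs, hsj⟩ := exists_nat_le_mul_le hW h₀ h₁
  rw [sum_mul_ramps hj hjs hsj, sum_triangleCoeff_mul (by positivity), triangleWave_eq hjs hsj]

lemma sum_parabolaCoeff_mul_ramps (hW : 0 < W) {s : ℝ} (h₀ : 0 ≤ s) (h₁ : s ≤ 1) :
    ∑ k ∈ range W, parabolaCoeff W k * ramps W s k = parabolaStep W s := by
  obtain ⟨j, hj, hjs, hsj⟩ := exists_nat_le_mul_le hW h₀ h₁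
  rw [sum_mul_ramps hj hjs hsj, sum_parabolaCoeff_mul (by positivity), parabolaStep,
    parabolaWave_of_mem_Icc h₀ h₁,
    parabolaWave_eq (n := j) (by simpa using hjs) (by simpa using hsj)]
  push_cast; ring

end Ramps

section Telescoping

variable {W : ℕ}

noncomputable def zigzag (W j : ℕ) (u : ℝ) : ℝ := triangleWave ((W : ℝ) ^ j * u)

lemma zigzag_zero {u : ℝ} (h₀ : 0 ≤ u) (h₁ : u ≤ 1) : zigzag W 0 u = u := by
  rw [zigzag, pow_zero, one_mul, triangleWave_of_mem_Icc h₀ h₁]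

lemma triangleWave_mul_zigzag (W j : ℕ) (u : ℝ) :
    triangleWave (W * zigzag W j u) = zigzag W (j + 1) u := by
  rw [zigzag, triangleWave_natCast_mul_triangleWave, zigzag, pow_succ, mul_comm _ (W : ℝ),
    mul_assoc]

lemma zigzag_nonneg (W j : ℕ) (u : ℝ) : 0 ≤ zigzag W j u := triangleWave_nonneg _

lemma zigzag_le_one (W j : ℕ) (u : ℝ) : zigzag W j u ≤ 1 := triangleWave_le_one _

noncomputable def parabolaSum (W j : ℕ) (u : ℝ) : ℝ :=
  ∑ ℓ ∈ range j, parabolaStep W (zigzag W ℓ u) / ((W : ℝ) ^ ℓ) ^ 2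

lemma parabolaSum_succ (W j : ℕ) (u : ℝ) :
    parabolaSum W (j + 1) u =
      parabolaSum W j u + parabolaStep W (zigzag W j u) / ((W : ℝ) ^ j) ^ 2 :=
  sum_range_succ _ _

lemma parabolaSum_eq (hW : (W : ℝ) ≠ 0) {u : ℝ} (h₀ : 0 ≤ u) (h₁ : u ≤ 1) (j : ℕ) :
    parabolaSum W j u = u * (1 - u) - parabolaWave ((W : ℝ) ^ j * u) / ((W : ℝ) ^ j) ^ 2 := by
  induction j with
  | zero => simp [parabolaSum, parabolaWave_of_mem_Icc h₀ h₁]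
  | succ j ih =>
    have hp₁ := parabolaWave_natCast_mul_triangleWave 1 ((W : ℝ) ^ j * u)
    have hpW := parabolaWave_natCast_mul_triangleWave W ((W : ℝ) ^ j * u)
    rw [Nat.cast_one, one_mul, one_mul] at hp₁
    rw [parabolaSum_succ, ih, parabolaStep, zigzag, hp₁, hpW, pow_succ]
    field_simp
    ring_nf

lemma abs_parabolaSum_le (hW : 0 < W) {u : ℝ} (h₀ : 0 ≤ u) (h₁ : u ≤ 1) (j : ℕ) :
    |parabolaSum W j u| ≤ 1 / 4 := by
  have hN : 1 ≤ ((W : ℝ) ^ j) ^ 2 := one_le_pow₀ (one_le_pow₀ (by exact_mod_cast hW))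
  have hp := parabolaWave_nonneg ((W : ℝ) ^ j * u)
  have hq : parabolaWave ((W : ℝ) ^ j * u) / ((W : ℝ) ^ j) ^ 2 ≤ 1 / 4 :=
    (div_le_self hp hN).trans (parabolaWave_le_quarter _)
  rw [parabolaSum_eq (by positivity) h₀ h₁, abs_le]
  constructor <;> nlinarith [div_nonneg hp (zero_le_one.trans hN), sq_nonneg (u - 1 / 2)]

end Telescoping

namespace MLP

variable {d k : ℕ}

noncomputable def ofFun (L : ℕ) (w : ℕ → ℕ) (hw₀ : w 0 = d) (hw : w (L + 1) = k)
    (A : ℕ → ℕ → ℕ → ℝ) (b : ℕ → ℕ → ℝ) : MLP d k where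
  depth := L
  width := w
  width_in := hw₀
  width_out := hw
  A ℓ := Matrix.of fun i j => A ℓ i j
  b ℓ i := b ℓ i

variable {L : ℕ} {w : ℕ → ℕ} {hw₀ : w 0 = d} {hw : w (L + 1) = k} {A : ℕ → ℕ → ℕ → ℝ}
  {b : ℕ → ℕ → ℝ} {x : Fin d → ℝ} {V : ℕ → ℕ → ℝ}

theorem layer_ofFun (h₀ : ∀ i (hi : i < d), V 0 i = x ⟨i, hi⟩)
    (hstep : ∀ ℓ < L, ∀ i < w (ℓ + 1),
      V (ℓ + 1) i = relu (∑ j ∈ range (w ℓ), A ℓ i j * V ℓ j + b ℓ i)) :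
    ∀ ℓ ≤ L, ∀ i : Fin (w ℓ), (ofFun L w hw₀ hw A b).layer x ℓ i = V ℓ i
  | 0, _, i => (h₀ i (hw₀ ▸ i.isLt)).symm
  | ℓ + 1, hℓ, i => by
    rw [layer, hstep ℓ hℓ i i.isLt, ← Fin.sum_univ_eq_sum_range (fun j => A ℓ i j * V ℓ j)]
    show relu (∑ j : Fin (w ℓ), A ℓ i j * (ofFun L w hw₀ hw A b).layer x ℓ j + b ℓ i) = _
    simp only [layer_ofFun h₀ hstep ℓ (Nat.le_of_succ_le hℓ)]

theorem eval_ofFun (h₀ : ∀ i (hi : i < d), V 0 i = x ⟨i, hi⟩)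
    (hstep : ∀ ℓ < L, ∀ i < w (ℓ + 1),
      V (ℓ + 1) i = relu (∑ j ∈ range (w ℓ), A ℓ i j * V ℓ j + b ℓ i)) (i : Fin k) :
    (ofFun L w hw₀ hw A b).eval x i = ∑ j ∈ range (w L), A L i j * V L j + b L i := by
  rw [eval, ← Fin.sum_univ_eq_sum_range (fun j => A L i j * V L j)]
  show ∑ j : Fin (w L), A L i j * (ofFun L w hw₀ hw A b).layer x L j + b L i = _
  simp only [layer_ofFun h₀ hstep L le_rfl]

end MLP

section Blocks

variable {α : Type*} {W : ℕ}

def block3 (W : ℕ) (a b : ℕ → α) (c : α) (i : ℕ) : α :=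
  if i < W then a i else if i < 2 * W then b (i - W) else c

lemma block3_of_lt {a b : ℕ → α} {c : α} {i : ℕ} (hi : i < W) : block3 W a b c i = a i :=
  if_pos hi

lemma block3_add {a b : ℕ → α} {c : α} {i : ℕ} (hi : i < W) : block3 W a b c (W + i) = b i := by
  rw [block3, if_neg (by omega), if_pos (by omega), Nat.add_sub_cancel_left]

lemma block3_two_mul {a b : ℕ → α} {c : α} : block3 W a b c (2 * W) = c := by
  rw [block3, if_neg (by omega), if_neg (by omega)]

lemma forall_lt_two_mul_add_one {P : ℕ → Prop} (ha : ∀ i < W, P i) (hb : ∀ i < W, P (W + i))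
    (hc : P (2 * W)) : ∀ i < 2 * W + 1, P i := by
  intro i hi
  rcases lt_or_ge i W with h | h
  · exact ha i h
  rcases lt_or_ge i (2 * W) with h' | h'
  · simpa [Nat.add_sub_cancel' h] using hb (i - W) (by omega)
  · exact (show i = 2 * W by omega) ▸ hc

lemma sum_block3_mul_block3 (a b a' b' : ℕ → ℝ) (c c' : ℝ) :
    ∑ i ∈ range (2 * W + 1), block3 W a b c i * block3 W a' b' c' i =
      ∑ i ∈ range W, a i * a' i + ∑ i ∈ range W, b i * b' i + c * c' := by
  rw [sum_range_succ, block3_two_mul, block3_two_mul, two_mul, sum_range_add]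
  congr 2 <;> refine sum_congr rfl fun i hi => ?_
  · rw [block3_of_lt (mem_range.mp hi), block3_of_lt (mem_range.mp hi)]
  · rw [block3_add (mem_range.mp hi), block3_add (mem_range.mp hi)]

end Blocks

section ProductNet

variable {W : ℕ}

noncomputable def inputWeight (W : ℕ) : ℕ → ℕ → ℝ :=
  block3 W (fun _ _ => 1 / 4) (fun _ j => if j = 0 then 1 / 4 else -(1 / 4)) 0

noncomputable def inputBias (W : ℕ) : ℕ → ℝ :=
  block3 W (fun i => 1 / 2 - i / W) (fun i => 1 / 2 - i / W) 2

noncomputable def accumulatorRow (W j : ℕ) : ℕ → ℝ :=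
  block3 W (fun k => parabolaCoeff W k / ((W : ℝ) ^ j) ^ 2)
    (fun k => -(parabolaCoeff W k / ((W : ℝ) ^ j) ^ 2)) 1

noncomputable def hiddenWeight (W j : ℕ) : ℕ → ℕ → ℝ :=
  block3 W (fun _ => block3 W (triangleCoeff W) 0 0) (fun _ => block3 W 0 (triangleCoeff W) 0)
    (accumulatorRow W j)

noncomputable def hiddenBias (W : ℕ) : ℕ → ℝ := block3 W (fun i => -(i / W)) (fun i => -(i / W)) 0

noncomputable def hiddenState (W : ℕ) (u v : ℝ) (j : ℕ) : ℕ → ℝ :=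
  -- the shift by `2` keeps the running difference (of size `≤ 1 / 2`) out of reach of the ReLU
  block3 W (ramps W (zigzag W j u)) (ramps W (zigzag W j v))
    (parabolaSum W j u - parabolaSum W j v + 2)

lemma sum_accumulatorRow_mul_hiddenState (hW : 0 < W) (u v : ℝ) (j : ℕ) :
    ∑ k ∈ range (2 * W + 1), accumulatorRow W j k * hiddenState W u v j k =
      parabolaSum W (j + 1) u - parabolaSum W (j + 1) v + 2 := by
  have hsum (s : ℝ) (h₀ : 0 ≤ s) (h₁ : s ≤ 1) :
      ∑ k ∈ range W, parabolaCoeff W k / ((W : ℝ) ^ j) ^ 2 * ramps W s k =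
        parabolaStep W s / ((W : ℝ) ^ j) ^ 2 := by
    simp only [div_mul_eq_mul_div, ← sum_div, sum_parabolaCoeff_mul_ramps hW h₀ h₁]
  rw [accumulatorRow, hiddenState, sum_block3_mul_block3]
  simp only [neg_mul, sum_neg_distrib, one_mul,
    hsum _ (zigzag_nonneg W j u) (zigzag_le_one W j u),
    hsum _ (zigzag_nonneg W j v) (zigzag_le_one W j v), parabolaSum_succ]
  ring

lemma hiddenState_zero {x y : ℝ} (hu₀ : 0 ≤ (x + y + 2) / 4)
    (hu₁ : (x + y + 2) / 4 ≤ 1) (hv₀ : 0 ≤ (x - y + 2) / 4) (hv₁ : (x - y + 2) / 4 ≤ 1) :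
    ∀ i < 2 * W + 1, hiddenState W ((x + y + 2) / 4) ((x - y + 2) / 4) 0 i =
      relu (∑ k ∈ range 2, inputWeight W i k * (if k = 0 then x else y) + inputBias W i) := by
  refine forall_lt_two_mul_add_one (fun i hi => ?_) (fun i hi => ?_) ?_
  · simp only [hiddenState, inputWeight, inputBias, block3_of_lt hi, ramps, zigzag_zero hu₀ hu₁,
      sum_range_succ, sum_range_zero, if_pos, one_ne_zero, if_false, zero_add]
    ring_nf
  · simp only [hiddenState, inputWeight, inputBias, block3_add hi, ramps, zigzag_zero hv₀ hv₁,
      sum_range_succ, sum_range_zero, if_pos, one_ne_zero, if_false, zero_add]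
    ring_nf
  · simp only [hiddenState, inputWeight, inputBias, block3_two_mul, parabolaSum, range_zero,
      sum_empty, Pi.zero_apply, zero_mul, sum_const_zero]
    norm_num [relu_of_nonneg]

lemma hiddenState_succ (hW : 0 < W) {u v : ℝ} (hu₀ : 0 ≤ u) (hu₁ : u ≤ 1) (hv₀ : 0 ≤ v)
    (hv₁ : v ≤ 1) (j : ℕ) :
    ∀ i < 2 * W + 1, hiddenState W u v (j + 1) i = relu (∑ k ∈ range (2 * W + 1),
      hiddenWeight W j i k * hiddenState W u v j k + hiddenBias W i) := by
  refine forall_lt_two_mul_add_one (fun i hi => ?_) (fun i hi => ?_) ?_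
  · simp only [hiddenState, hiddenWeight, hiddenBias, block3_of_lt hi, sum_block3_mul_block3,
      Pi.zero_apply, zero_mul, sum_const_zero, add_zero]
    rw [sum_triangleCoeff_mul_ramps hW (zigzag_nonneg W j u) (zigzag_le_one W j u),
      triangleWave_mul_zigzag, ramps, sub_eq_add_neg]
  · simp only [hiddenState, hiddenWeight, hiddenBias, block3_add hi, sum_block3_mul_block3,
      Pi.zero_apply, zero_mul, sum_const_zero, zero_add, add_zero]
    rw [sum_triangleCoeff_mul_ramps hW (zigzag_nonneg W j v) (zigzag_le_one W j v),
      triangleWave_mul_zigzag, ramps, sub_eq_add_neg]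
  · have h := abs_le.mp (abs_parabolaSum_le hW hu₀ hu₁ (j + 1))
    have h' := abs_le.mp (abs_parabolaSum_le hW hv₀ hv₁ (j + 1))
    rw [hiddenWeight, hiddenBias, block3_two_mul, block3_two_mul, add_zero,
      sum_accumulatorRow_mul_hiddenState hW, relu_of_nonneg (by linarith)]
    simp only [hiddenState, block3_two_mul]

def productWidth (W L ℓ : ℕ) : ℕ := if ℓ = 0 then 2 else if ℓ = L + 1 then 1 else 2 * W + 1

noncomputable def productWeight (W L : ℕ) : ℕ → ℕ → ℕ → ℝ
  | 0 => inputWeight W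
  -- the output is `-4` times the next running difference; the bias `8` below removes the shift
  | j + 1 => if j + 1 < L then hiddenWeight W j else fun _ k => -4 * accumulatorRow W j k

noncomputable def productBias (W L : ℕ) : ℕ → ℕ → ℝ
  | 0 => inputBias W
  | j + 1 => if j + 1 < L then hiddenBias W else fun _ => 8

noncomputable def productNet (W L : ℕ) : MLP 2 1 :=
  MLP.ofFun L (productWidth W L) (by simp [productWidth]) (by simp [productWidth])
    (productWeight W L) (productBias W L)

noncomputable def productState (W : ℕ) (x y : ℝ) : ℕ → ℕ → ℝ
  | 0 => fun i => if i = 0 then x else y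
  | j + 1 => hiddenState W ((x + y + 2) / 4) ((x - y + 2) / 4) j

lemma productWidth_of_mem_Icc {L ℓ : ℕ} (h₀ : 1 ≤ ℓ) (h₁ : ℓ ≤ L) :
    productWidth W L ℓ = 2 * W + 1 := by
  rw [productWidth, if_neg (by omega), if_neg (by omega)]

lemma productState_succ (hW : 0 < W) {x y : ℝ} (hx : x ∈ Set.Icc (-1 : ℝ) 1)
    (hy : y ∈ Set.Icc (-1 : ℝ) 1) {L : ℕ} :
    ∀ ℓ < L, ∀ i < productWidth W L (ℓ + 1), productState W x y (ℓ + 1) i =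
      relu (∑ k ∈ range (productWidth W L ℓ), productWeight W L ℓ i k * productState W x y ℓ k +
        productBias W L ℓ i) := by
  obtain ⟨hx₀, hx₁⟩ := hx
  obtain ⟨hy₀, hy₁⟩ := hy
  rintro (_ | j) hj i hi
  · rw [productWidth_of_mem_Icc le_rfl hj] at hi
    exact hiddenState_zero (by linarith) (by linarith) (by linarith) (by linarith) i hi
  · rw [productWidth_of_mem_Icc (by omega) hj] at hi
    rw [productWidth_of_mem_Icc (by omega) hj.le, productWeight, productBias, if_pos hj, if_pos hj]
    exact hiddenState_succ hW (by linarith) (by linarith) (by linarith) (by linarith) j i hi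

lemma productNet_eval_eq_parabolaSum (hW : 0 < W) {L : ℕ} (hL : 1 ≤ L) {x y : ℝ}
    (hx : x ∈ Set.Icc (-1 : ℝ) 1) (hy : y ∈ Set.Icc (-1 : ℝ) 1) :
    (productNet W L).eval ![x, y] 0 = -4 * (parabolaSum W L ((x + y + 2) / 4) -
      parabolaSum W L ((x - y + 2) / 4)) := by
  obtain ⟨j, rfl⟩ : ∃ j, L = j + 1 := ⟨L - 1, by omega⟩
  rw [productNet,
    MLP.eval_ofFun (V := productState W x y) (fun i hi => ?_) (productState_succ hW hx hy),
    productWidth_of_mem_Icc hL le_rfl, productWeight, productBias, if_neg (lt_irrefl _),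
    if_neg (lt_irrefl _)]
  · simp only [productState, mul_assoc, ← mul_sum, sum_accumulatorRow_mul_hiddenState hW]
    ring
  · interval_cases i <;> rfl

end ProductNet

section Bounds

variable {W L : ℕ}

lemma productNet_eval_eq_mul_add (hW : 0 < W) (hL : 1 ≤ L) {x y : ℝ}
    (hx : x ∈ Set.Icc (-1 : ℝ) 1) (hy : y ∈ Set.Icc (-1 : ℝ) 1) :
    (productNet W L).eval ![x, y] 0 = x * y + 4 * (parabolaWave ((W : ℝ) ^ L * ((x + y + 2) / 4)) -
      parabolaWave ((W : ℝ) ^ L * ((x - y + 2) / 4))) / ((W : ℝ) ^ L) ^ 2 := by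
  rw [productNet_eval_eq_parabolaSum hW hL hx hy]
  obtain ⟨hx₀, hx₁⟩ := hx
  obtain ⟨hy₀, hy₁⟩ := hy
  have hW' : (W : ℝ) ≠ 0 := by positivity
  rw [parabolaSum_eq hW' (by linarith) (by linarith), parabolaSum_eq hW' (by linarith) (by linarith)]
  ring

lemma abs_mul_sub_mul_le {x y x' y' : ℝ} (hx : |x| ≤ 1) (hy' : |y'| ≤ 1) :
    |x * y - x' * y'| ≤ |x - x'| + |y - y'| :=
  calc |x * y - x' * y'| = |x * (y - y') + y' * (x - x')| := by ring_nf
    _ ≤ |x| * |y - y'| + |y'| * |x - x'| := by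
        rw [← abs_mul, ← abs_mul]; exact abs_add_le _ _
    _ ≤ 1 * |y - y'| + 1 * |x - x'| := by gcongr
    _ = |x - x'| + |y - y'| := by ring

lemma abs_mul_sub_productNet_le (hW : 0 < W) (hL : 1 ≤ L) {x y : ℝ}
    (hx : x ∈ Set.Icc (-1 : ℝ) 1) (hy : y ∈ Set.Icc (-1 : ℝ) 1) :
    |x * y - (productNet W L).eval ![x, y] 0| ≤ ((W : ℝ) ^ L)⁻¹ := by
  set N : ℝ := (W : ℝ) ^ L
  have hN : 1 ≤ N := one_le_pow₀ (by exact_mod_cast hW)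
  set p := parabolaWave (N * ((x + y + 2) / 4))
  set q := parabolaWave (N * ((x - y + 2) / 4))
  have hpq : |p - q| ≤ 1 / 4 := abs_sub_le_of_nonneg_of_le (parabolaWave_nonneg _)
    (parabolaWave_le_quarter _) (parabolaWave_nonneg _) (parabolaWave_le_quarter _)
  rw [productNet_eval_eq_mul_add hW hL hx hy, sub_add_cancel_left, abs_neg, abs_div, abs_mul,
    abs_of_pos (by positivity : (0 : ℝ) < N ^ 2), abs_of_pos (by norm_num : (0 : ℝ) < 4)]
  calc 4 * |p - q| / N ^ 2 ≤ 1 / N ^ 2 := by gcongr; linarith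
    _ ≤ N⁻¹ := by rw [one_div]; exact inv_anti₀ (by positivity) (by nlinarith)

lemma abs_productNet_sub_le (hW : 0 < W) (hL : 1 ≤ L) {x x' y y' : ℝ}
    (hx : x ∈ Set.Icc (-1 : ℝ) 1) (hx' : x' ∈ Set.Icc (-1 : ℝ) 1)
    (hy : y ∈ Set.Icc (-1 : ℝ) 1) (hy' : y' ∈ Set.Icc (-1 : ℝ) 1) :
    |(productNet W L).eval ![x, y] 0 - (productNet W L).eval ![x', y'] 0| ≤
      3 * (|x - x'| + |y - y'|) := by
  set N : ℝ := (W : ℝ) ^ L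
  have hN : 1 ≤ N := one_le_pow₀ (by exact_mod_cast hW)
  have hN₀ : 0 < N := by linarith
  set g : ℝ → ℝ := fun a => 4 * parabolaWave (N * a) / N ^ 2
  have hg (a b : ℝ) : |g a - g b| ≤ 4 * |a - b| := by
    have h := abs_parabolaWave_sub_le (N * a) (N * b)
    rw [← mul_sub, abs_mul, abs_of_pos hN₀] at h
    rw [← sub_div, ← mul_sub, abs_div, abs_mul, abs_of_pos (by positivity : (0 : ℝ) < N ^ 2),
      abs_of_pos (by norm_num : (0 : ℝ) < 4), div_le_iff₀ (by positivity)]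
    nlinarith [mul_le_mul_of_nonneg_right hN (mul_nonneg hN₀.le (abs_nonneg (a - b)))]
  have heval {x y : ℝ} (hx : x ∈ Set.Icc (-1 : ℝ) 1) (hy : y ∈ Set.Icc (-1 : ℝ) 1) :
      (productNet W L).eval ![x, y] 0 = x * y + (g ((x + y + 2) / 4) - g ((x - y + 2) / 4)) := by
    rw [productNet_eval_eq_mul_add hW hL hx hy]; ring
  have hu := hg ((x + y + 2) / 4) ((x' + y' + 2) / 4)
  have hv := hg ((x' - y' + 2) / 4) ((x - y + 2) / 4)
  rw [show (x + y + 2) / 4 - (x' + y' + 2) / 4 = ((x - x') + (y - y')) / 4 by ring] at hu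
  rw [show (x' - y' + 2) / 4 - (x - y + 2) / 4 = -((x - x') - (y - y')) / 4 by ring,
    neg_div, abs_neg] at hv
  rw [abs_div, abs_of_pos (by norm_num : (0 : ℝ) < 4)] at hu hv
  have := abs_add_le (x - x') (y - y')
  have := abs_sub (x - x') (y - y')
  have := abs_mul_sub_mul_le (y := y) (x' := x') (abs_le.mpr hx) (abs_le.mpr hy')
  rw [heval hx hy, heval hx' hy']
  calc _ = |(x * y - x' * y') + (g ((x + y + 2) / 4) - g ((x' + y' + 2) / 4)) +
        (g ((x' - y' + 2) / 4) - g ((x - y + 2) / 4))| := by ring_nf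
    _ ≤ _ := abs_add_three _ _ _
    _ ≤ 3 * (|x - x'| + |y - y'|) := by linarith

end Bounds

/-- approximation of the product function.  For any `W, L ∈ ℕ` there is
`φ ∈ NN_{2,1}(9W+1, L)` with `|xy − φ(x,y)| ≤ 6 W^{−L}` and
`|φ(x,y) − φ(x',y')| ≤ 7|x−x'| + 7|y−y'|` for all `x, x', y, y' ∈ [−1,1]`. -/
theorem statement6 (W L : ℕ) (hW : 1 ≤ W) (hL : 1 ≤ L) :
    ∃ φ ∈ NNScalar 2 (9 * W + 1) L,
      ∀ x ∈ Set.Icc (-1 : ℝ) 1, ∀ x' ∈ Set.Icc (-1 : ℝ) 1,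
        ∀ y ∈ Set.Icc (-1 : ℝ) 1, ∀ y' ∈ Set.Icc (-1 : ℝ) 1,
          |x * y - φ ![x, y]| ≤ 6 * (W : ℝ) ^ (-(L : ℤ)) ∧
          |φ ![x, y] - φ ![x', y']| ≤ 7 * |x - x'| + 7 * |y - y'| := by
  refine ⟨fun z => (productNet W L).eval z 0,
    ⟨_, ⟨productNet W L, rfl, fun ℓ h₀ h₁ => ?_, rfl⟩, rfl⟩,
    fun x hx x' hx' y hy y' hy' => ⟨?_, ?_⟩⟩
  · show productWidth W L ℓ ≤ 9 * W + 1
    rw [productWidth_of_mem_Icc h₀ h₁]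
    omega
  · have hN : 0 ≤ ((W : ℝ) ^ L)⁻¹ := by positivity
    calc _ ≤ ((W : ℝ) ^ L)⁻¹ := abs_mul_sub_productNet_le hW hL hx hy
      _ ≤ 6 * (W : ℝ) ^ (-(L : ℤ)) := by rw [zpow_neg, zpow_natCast]; linarith
  · calc _ ≤ 3 * (|x - x'| + |y - y'|) := abs_productNet_sub_le hW hL hx hx' hy hy'
      _ ≤ 7 * |x - x'| + 7 * |y - y'| := by linarith [abs_nonneg (x - x'), abs_nonneg (y - y')]
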